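/- arXiv:2103.01750 — 4 statements merged into one kernel-verified Lean document; each statement's English description precedes it below -/
import Mathlib

section
/- Let 0 < p < 1, c > 0, and λ = 1 + c·p/(1−p). Define π₀ = (1+(c−1)p)/(1−p+c) and, for k ≥ 1, π_k = (λ/(λ+k+c))·∏_{j=0}^{k−1} (j+c)/(λ+j+c). Then ∑_{k=0}^∞ π_k = 1. -/
/-!
Writing `Q k = ∏_{j<k} (j+c)/(λ+j+c)`, one has `λ/(λ+k+c) · Q k = Q k - Q (k+1)`, and the identity
`1 + (c-1)p = λ(1-p)` shows that `π₀` is the `k = 0` instance of this formula. Hence the series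
telescopes to `Q 0 - lim Q = 1`, since `Q k ≤ c/(k+c) → 0` as soon as `λ ≥ 1`.
-/

open Filter Topology Finset

theorem hasSum_sub_succ_of_antitone {f : ℕ → ℝ} {l : ℝ} (hf : Antitone f)
    (h : Tendsto f atTop (𝓝 l)) : HasSum (fun n ↦ f n - f (n + 1)) (f 0 - l) := by
  rw [hasSum_iff_tendsto_nat_of_nonneg fun n ↦ sub_nonneg.2 (hf n.le_succ)]
  simp_rw [sum_range_sub']
  exact tendsto_const_nhds.sub h

/-- The tail mass `Q k = π_k + π_{k+1} + ⋯` of the in-degree distribution. -/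
noncomputable def degreeTail (lam c : ℝ) (k : ℕ) : ℝ :=
  ∏ j ∈ range k, ((j : ℝ) + c) / (lam + j + c)

namespace degreeTail

variable {lam c : ℝ}

@[simp]
theorem zero : degreeTail lam c 0 = 1 := prod_range_zero _

theorem succ (k : ℕ) :
    degreeTail lam c (k + 1) = degreeTail lam c k * ((k + c) / (lam + k + c)) :=
  prod_range_succ _ _

theorem nonneg (hlam : 0 ≤ lam) (hc : 0 ≤ c) (k : ℕ) : 0 ≤ degreeTail lam c k :=
  prod_nonneg fun j _ ↦ by positivity

theorem antitone (hlam : 0 ≤ lam) (hc : 0 ≤ c) : Antitone (degreeTail lam c) := by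
  refine antitone_nat_of_succ_le fun k ↦ ?_
  rw [succ]
  refine mul_le_of_le_one_right (nonneg hlam hc k) ?_
  exact div_le_one_of_le₀ (by linarith) (by positivity)

theorem mul_eq_sub_succ {k : ℕ} (hk : lam + k + c ≠ 0) :
    lam / (lam + k + c) * degreeTail lam c k = degreeTail lam c k - degreeTail lam c (k + 1) := by
  rw [succ]
  field_simp
  ring

theorem le_div (hlam : 1 ≤ lam) (hc : 0 < c) (k : ℕ) : degreeTail lam c k ≤ c / (k + c) := by
  induction k with
  | zero => simp [hc.ne']
  | succ k ih =>
    calc degreeTail lam c (k + 1)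
        ≤ c / (k + c) * ((k + c) / (lam + k + c)) := by
          rw [succ]; gcongr
      _ = c / (lam + k + c) := by field_simp
      _ ≤ c / ((k + 1 : ℕ) + c) := by
          push_cast
          exact div_le_div_of_nonneg_left hc.le (by positivity) (by linarith)

theorem tendsto_zero (hlam : 1 ≤ lam) (hc : 0 < c) :
    Tendsto (degreeTail lam c) atTop (𝓝 0) := by
  have hdiv : Tendsto (fun k : ℕ ↦ c / (k + c)) atTop (𝓝 0) :=
    tendsto_const_nhds.div_atTop (tendsto_atTop_add_const_right _ c tendsto_natCast_atTop_atTop)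
  exact squeeze_zero (nonneg (by linarith) hc.le) (le_div hlam hc) hdiv

end degreeTail

theorem pi_sums_to_one (p c lam : ℝ) (hp : 0 < p) (hp1 : p < 1) (hc : 0 < c)
    (hlam : lam = 1 + c * p / (1 - p)) (π : ℕ → ℝ)
    (hπ0 : π 0 = (1 + (c - 1) * p) / (1 - p + c))
    (hπ : ∀ k : ℕ, 1 ≤ k →
      π k = lam / (lam + k + c) * ∏ j ∈ Finset.range k, ((j : ℝ) + c) / (lam + j + c)) :
    HasSum π 1 := by
  have hq : 0 < 1 - p := by linarith
  have hlam1 : 1 ≤ lam := by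
    rw [hlam]
    linarith [show 0 ≤ c * p / (1 - p) by positivity]
  have hπ_all : ∀ k, π k = lam / (lam + k + c) * degreeTail lam c k := by
    rintro (_ | k)
    · rw [hπ0, degreeTail.zero, hlam]
      field_simp
      ring
    · exact hπ _ k.succ_pos
  have hπ_tel : π = fun k ↦ degreeTail lam c k - degreeTail lam c (k + 1) := by
    funext k
    rw [hπ_all, degreeTail.mul_eq_sub_succ (by positivity)]
  simpa [hπ_tel] using hasSum_sub_succ_of_antitone (degreeTail.antitone (by linarith) hc.le)
    (degreeTail.tendsto_zero hlam1 hc)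
end

section
/- Let c > 0 and λ > 0. Define π_k = (λ/(λ+k+c))·∏_{j=0}^{k−1} (j+c)/(λ+j+c) for k ≥ 1. Then the limit as k → ∞ of π_k / k^(−(1+λ)) exists and equals λ·Γ(λ+c)/Γ(c), where Γ is the Gamma function. -/
open Filter

theorem pi_power_law_asymptotics (c lam : ℝ) (hc : 0 < c) (hlam : 0 < lam) (π : ℕ → ℝ)
    (hπ : ∀ k : ℕ, 1 ≤ k →
      π k = lam / (lam + k + c) * ∏ j ∈ Finset.range k, ((j : ℝ) + c) / (lam + j + c)) :
    Filter.Tendsto (fun k : ℕ => π k / (k : ℝ) ^ (-(1 + lam)))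
      Filter.atTop (nhds (lam * Real.Gamma (lam + c) / Real.Gamma c)) := by
  have hA : Tendsto (fun k : ℕ => lam * ((k : ℝ) / ((k : ℝ) + c)) *
      (Real.GammaSeq (lam + c) k / Real.GammaSeq c k)) atTop
      (nhds (lam * Real.Gamma (lam + c) / Real.Gamma c)) := by
    have h1 : Tendsto (fun k : ℕ => lam * ((k : ℝ) / ((k : ℝ) + c))) atTop (nhds (lam * 1)) :=
      tendsto_const_nhds.mul (tendsto_natCast_div_add_atTop c)
    have h2 : Tendsto (fun k : ℕ => Real.GammaSeq (lam + c) k / Real.GammaSeq c k) atTop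
        (nhds (Real.Gamma (lam + c) / Real.Gamma c)) :=
      (Real.GammaSeq_tendsto_Gamma (lam + c)).div (Real.GammaSeq_tendsto_Gamma c)
        ((Real.Gamma_pos_of_pos hc).ne')
    have := h1.mul h2
    rw [mul_one] at this
    convert this using 2
    ring
  refine Tendsto.congr' ?_ hA
  filter_upwards [eventually_ge_atTop 1] with k hk
  have hkpos : (0 : ℝ) < k := by exact_mod_cast hk
  have hprodc : (0 : ℝ) < ∏ j ∈ Finset.range (k + 1), (c + j) :=
    Finset.prod_pos fun j _ => by positivity
  have hprodl : (0 : ℝ) < ∏ j ∈ Finset.range (k + 1), (lam + c + j) :=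
    Finset.prod_pos fun j _ => by positivity
  -- rewrite π k
  have hπk := hπ k hk
  have hprod_eq : ∏ j ∈ Finset.range k, ((j : ℝ) + c) / (lam + j + c) =
      (∏ j ∈ Finset.range k, (c + (j : ℝ))) / ∏ j ∈ Finset.range k, (lam + c + j) := by
    rw [Finset.prod_div_distrib]
    congr 1
    · exact Finset.prod_congr rfl fun j _ => by ring
    · exact Finset.prod_congr rfl fun j _ => by ring
  have hc1 : ∏ j ∈ Finset.range (k + 1), (c + (j : ℝ)) =
      (∏ j ∈ Finset.range k, (c + (j : ℝ))) * (c + k) := Finset.prod_range_succ _ _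
  have hl1 : ∏ j ∈ Finset.range (k + 1), (lam + c + (j : ℝ)) =
      (∏ j ∈ Finset.range k, (lam + c + (j : ℝ))) * (lam + c + k) := Finset.prod_range_succ _ _
  have hpc : (0 : ℝ) < ∏ j ∈ Finset.range k, (c + (j : ℝ)) :=
    Finset.prod_pos fun j _ => by positivity
  have hpl : (0 : ℝ) < ∏ j ∈ Finset.range k, (lam + c + (j : ℝ)) :=
    Finset.prod_pos fun j _ => by positivity
  have hrpow_c : (0 : ℝ) < (k : ℝ) ^ c := Real.rpow_pos_of_pos hkpos c
  have hrpow_l : (0 : ℝ) < (k : ℝ) ^ lam := Real.rpow_pos_of_pos hkpos lam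
  have hfact : (0 : ℝ) < ((Nat.factorial k : ℕ) : ℝ) := by exact_mod_cast Nat.factorial_pos k
  simp only [Real.GammaSeq]
  rw [hπk, hprod_eq, hc1, hl1]
  have hrneg : (k : ℝ) ^ (-(1 + lam)) = ((k : ℝ) * (k : ℝ) ^ lam)⁻¹ := by
    rw [Real.rpow_neg hkpos.le, Real.rpow_add hkpos, Real.rpow_one]
  have hrlc : (k : ℝ) ^ (lam + c) = (k : ℝ) ^ lam * (k : ℝ) ^ c :=
    Real.rpow_add hkpos lam c
  rw [hrneg, hrlc]
  have hck : (0 : ℝ) < c + k := by positivity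
  have hlck : (0 : ℝ) < lam + c + k := by positivity
  have hlkc : (0 : ℝ) < lam + k + c := by positivity
  field_simp
  ring
end

section
/- Let (v_t)_{t≥T} be a nonnegative sequence satisfying v_{t+1} − v_t ≤ C·t^(−1/2)·(log t)·√(v_t) + C for all t ≥ T, for some constants C > 0 and T ≥ 2, and suppose v_t = O(t²). Then for every ε > 0, v_t = O(t^(1+ε)). -/
lemma bootstrap_step (v : ℕ → ℝ) (hv : ∀ t, 0 ≤ v t) (C : ℝ) (hC : 0 < C)
    (T : ℕ) (hT : 2 ≤ T)
    (hrec : ∀ t : ℕ, T ≤ t →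
      v (t + 1) - v t ≤ C * (t : ℝ) ^ (-(1:ℝ)/2) * Real.log t * Real.sqrt (v t) + C)
    (a D : ℝ) (ha : 1 ≤ a) (hD0 : 0 ≤ D)
    (hD : ∀ t : ℕ, T ≤ t → v t ≤ D * (t : ℝ) ^ a)
    (ε0 : ℝ) (hε0 : 0 < ε0) :
    ∃ D', 0 ≤ D' ∧ ∀ t : ℕ, T ≤ t → v t ≤ D' * (t : ℝ) ^ ((a+1)/2 + ε0) := by
  obtain ⟨b, hb_def⟩ : ∃ b : ℝ, b = (a-1)/2 + ε0 := ⟨_, rfl⟩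
  have hb : 0 ≤ b := by rw [hb_def]; linarith
  obtain ⟨K, hK_def⟩ : ∃ K : ℝ, K = C * Real.sqrt D / ε0 + C := ⟨_, rfl⟩
  have hK : 0 ≤ K := by
    have h0 : 0 ≤ C * Real.sqrt D / ε0 := by positivity
    rw [hK_def]; linarith
  -- increment bound
  have hinc : ∀ t : ℕ, T ≤ t → v (t+1) ≤ v t + K * (t:ℝ)^b := by
    intro t ht
    have ht2 : (2:ℝ) ≤ (t:ℝ) := by exact_mod_cast le_trans hT ht
    have ht0 : (0:ℝ) < (t:ℝ) := by linarith
    have ht1 : (1:ℝ) ≤ (t:ℝ) := by linarith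
    have hsq : Real.sqrt (v t) ≤ Real.sqrt D * (t:ℝ)^(a/2) := by
      have h1 : Real.sqrt (v t) ≤ Real.sqrt (D * (t:ℝ)^a) :=
        Real.sqrt_le_sqrt (hD t ht)
      have h2 : Real.sqrt ((t:ℝ)^a) = (t:ℝ)^(a/2) := by
        rw [Real.sqrt_eq_rpow, ← Real.rpow_mul ht0.le]
        congr 1; ring
      rwa [Real.sqrt_mul hD0, h2] at h1
    have hlog : Real.log t ≤ (t:ℝ)^ε0 / ε0 := Real.log_le_rpow_div ht0.le hε0
    have hlog0 : 0 ≤ Real.log t := Real.log_nonneg ht1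
    have h2 : C * (t:ℝ)^(-(1:ℝ)/2) * Real.log t * Real.sqrt (v t) + C ≤
        C * (t:ℝ)^(-(1:ℝ)/2) * ((t:ℝ)^ε0 / ε0) * (Real.sqrt D * (t:ℝ)^(a/2)) + C := by
      gcongr
    have h3 : C * (t:ℝ)^(-(1:ℝ)/2) * ((t:ℝ)^ε0 / ε0) * (Real.sqrt D * (t:ℝ)^(a/2))
        = (C * Real.sqrt D / ε0) * (t:ℝ)^b := by
      rw [hb_def, show (a-1)/2 + ε0 = (-(1:ℝ)/2) + ε0 + a/2 by ring,
        Real.rpow_add ht0, Real.rpow_add ht0]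
      ring
    have h4 : C ≤ C * (t:ℝ)^b := by
      have h1 : (1:ℝ) ≤ (t:ℝ)^b := Real.one_le_rpow ht1 hb
      nlinarith
    have h6 := hrec t ht
    rw [h3] at h2
    have h7 : v (t+1) - v t ≤ (C * Real.sqrt D / ε0) * (t:ℝ)^b + C := le_trans h6 h2
    have h5 : K * (t:ℝ)^b = (C * Real.sqrt D / ε0) * (t:ℝ)^b + C * (t:ℝ)^b := by
      rw [hK_def]; ring
    linarith
  -- induction: v t ≤ v T + K * t * t^b
  have hmain : ∀ t : ℕ, T ≤ t → v t ≤ v T + K * (t:ℝ) * (t:ℝ)^b := by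
    intro t ht
    induction t, ht using Nat.le_induction with
    | base =>
      have : 0 ≤ K * (T:ℝ) * (T:ℝ)^b := by positivity
      linarith
    | succ t ht ih =>
      have hstep := hinc t ht
      have hpow : (t:ℝ)^b ≤ ((t:ℝ)+1)^b :=
        Real.rpow_le_rpow (by positivity) (by linarith) hb
      have hmul : K * ((t:ℝ)+1) * (t:ℝ)^b ≤ K * ((t:ℝ)+1) * ((t:ℝ)+1)^b :=
        mul_le_mul_of_nonneg_left hpow (by positivity)
      have hexpand : K * ((t:ℝ)+1) * (t:ℝ)^b = K * (t:ℝ) * (t:ℝ)^b + K * (t:ℝ)^b := by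
        ring
      push_cast
      linarith
  refine ⟨v T + K, by have := hv T; linarith, fun t ht => ?_⟩
  have ht2 : (2:ℝ) ≤ (t:ℝ) := by exact_mod_cast le_trans hT ht
  have ht0 : (0:ℝ) < (t:ℝ) := by linarith
  have ht1 : (1:ℝ) ≤ (t:ℝ) := by linarith
  have hexp : (a+1)/2 + ε0 = 1 + b := by rw [hb_def]; ring
  have h1 : K * (t:ℝ) * (t:ℝ)^b = K * (t:ℝ)^((a+1)/2+ε0) := by
    rw [hexp, Real.rpow_add ht0, Real.rpow_one]; ring
  have h2 : (1:ℝ) ≤ (t:ℝ)^((a+1)/2+ε0) := Real.one_le_rpow ht1 (by rw [hexp]; linarith)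
  have h3 : v T ≤ v T * (t:ℝ)^((a+1)/2+ε0) := le_mul_of_one_le_right (hv T) h2
  have h4 := hmain t ht
  rw [h1] at h4
  linarith

theorem variance_bootstrap (v : ℕ → ℝ) (hv : ∀ t, 0 ≤ v t)
    (C : ℝ) (hC : 0 < C) (T : ℕ) (hT : 2 ≤ T)
    (hrec : ∀ t : ℕ, T ≤ t →
      v (t + 1) - v t ≤ C * (t : ℝ) ^ (-(1:ℝ)/2) * Real.log t * Real.sqrt (v t) + C)
    (hquad : ∃ D : ℝ, ∀ t : ℕ, T ≤ t → v t ≤ D * (t : ℝ) ^ 2) :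
    ∀ ε : ℝ, 0 < ε → ∃ D' : ℝ, ∀ t : ℕ, T ≤ t → v t ≤ D' * (t : ℝ) ^ ((1:ℝ) + ε) := by
  intro ε hε
  -- iterate: exponent 1 + ε/2 + (1/2)^n
  have key : ∀ n : ℕ, ∃ D : ℝ, 0 ≤ D ∧
      ∀ t : ℕ, T ≤ t → v t ≤ D * (t:ℝ) ^ ((1:ℝ) + ε/2 + (1/2:ℝ)^n) := by
    intro n
    induction n with
    | zero =>
      obtain ⟨D, hD⟩ := hquad
      have hD0 : 0 ≤ D := by
        have h1 := hD T le_rfl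
        have h2 := hv T
        have hT0 : (0:ℝ) < (T:ℝ)^2 := by positivity
        nlinarith
      refine ⟨D, hD0, fun t ht => ?_⟩
      have ht1 : (1:ℝ) ≤ (t:ℝ) := by
        have : (2:ℝ) ≤ (t:ℝ) := by exact_mod_cast le_trans hT ht
        linarith
      have h1 : v t ≤ D * (t:ℝ)^(2:ℝ) := by
        have := hD t ht
        rwa [show ((t:ℝ)^(2:ℝ)) = (t:ℝ)^2 by
          rw [show (2:ℝ) = ((2:ℕ):ℝ) by norm_num, Real.rpow_natCast]]
      have h2 : (t:ℝ)^(2:ℝ) ≤ (t:ℝ)^((1:ℝ) + ε/2 + (1/2:ℝ)^0) :=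
        Real.rpow_le_rpow_of_exponent_le ht1 (by norm_num; linarith)
      calc v t ≤ D * (t:ℝ)^(2:ℝ) := h1
        _ ≤ D * (t:ℝ)^((1:ℝ) + ε/2 + (1/2:ℝ)^0) := by
            exact mul_le_mul_of_nonneg_left h2 hD0
    | succ n ih =>
      obtain ⟨D, hD0, hD⟩ := ih
      have ha : (1:ℝ) ≤ (1:ℝ) + ε/2 + (1/2:ℝ)^n := by
        linarith [pow_pos (show (0:ℝ)<1/2 by norm_num) n]
      obtain ⟨D', hD'0, hD'⟩ := bootstrap_step v hv C hC T hT hrec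
        ((1:ℝ) + ε/2 + (1/2:ℝ)^n) D ha hD0 hD (ε/4) (by linarith)
      refine ⟨D', hD'0, fun t ht => ?_⟩
      have := hD' t ht
      rwa [show ((1:ℝ) + ε/2 + (1/2:ℝ)^n + 1)/2 + ε/4
          = (1:ℝ) + ε/2 + (1/2:ℝ)^(n+1) by rw [pow_succ]; ring] at this
  obtain ⟨n, hn⟩ := exists_pow_lt_of_lt_one (show (0:ℝ) < ε/2 by linarith)
    (show (1/2:ℝ) < 1 by norm_num)
  obtain ⟨D, hD0, hD⟩ := key n
  refine ⟨D, fun t ht => ?_⟩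
  have ht1 : (1:ℝ) ≤ (t:ℝ) := by
    have : (2:ℝ) ≤ (t:ℝ) := by exact_mod_cast le_trans hT ht
    linarith
  have h2 : (t:ℝ)^((1:ℝ) + ε/2 + (1/2:ℝ)^n) ≤ (t:ℝ)^((1:ℝ) + ε) :=
    Real.rpow_le_rpow_of_exponent_le ht1 (by linarith [hn.le])
  calc v t ≤ D * (t:ℝ)^((1:ℝ) + ε/2 + (1/2:ℝ)^n) := hD t ht
    _ ≤ D * (t:ℝ)^((1:ℝ) + ε) := mul_le_mul_of_nonneg_left h2 hD0
end

section
/- Let λ > 0, let (A_k) be positive non-decreasing reals, and let μ_k be defined by μ_0 = λ/(λ+A_0), μ_k = μ_{k−1}A_{k−1}/(λ+A_k). Suppose additionally that A_k → ∞ and ∑_k μ_k = 1. Then for every k ≥ 0, A_k = λ·(∑_{j>k} μ_j)/μ_k. -/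
/-!
The recursion says `μ (k+1) (λ + A (k+1)) = μ k A k`, i.e. `λ μ (k+1) = A k μ k - A (k+1) μ (k+1)`.
Summing this telescoping identity gives `λ ∑_{j ≤ k} μ j + A k μ k = λ`; since the `μ j` sum to `1`,
the partial sum is `1` minus the tail, so `A k μ k = λ ∑_{j > k} μ j`, and `μ k > 0` lets us divide.
-/

open Finset

section Recursion

variable {R : Type*} [CommRing R] {lam : R} {A μ : ℕ → R}

theorem lam_mul_sum_range_add_mul_eq (h0 : μ 0 * (lam + A 0) = lam)
    (hrec : ∀ k, μ (k + 1) * (lam + A (k + 1)) = μ k * A k) (k : ℕ) :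
    lam * ∑ j ∈ range (k + 1), μ j + A k * μ k = lam := by
  induction k with
  | zero => rw [sum_range_one]; linear_combination h0
  | succ n ih => rw [sum_range_succ]; linear_combination ih + hrec n

end Recursion

section Positive

variable {lam : ℝ} {A μ : ℕ → ℝ}

theorem mul_add_eq_mul_of_eq_div (hden : ∀ k, lam + A k ≠ 0)
    (hμ : ∀ k : ℕ, 1 ≤ k → μ k = μ (k - 1) * A (k - 1) / (lam + A k)) (k : ℕ) :
    μ (k + 1) * (lam + A (k + 1)) = μ k * A k := by
  rw [hμ (k + 1) k.succ_pos, Nat.add_sub_cancel, div_mul_cancel₀ _ (hden _)]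

theorem pos_of_eq_div (hlam : 0 < lam) (hApos : ∀ k, 0 < A k)
    (hμ0 : μ 0 = lam / (lam + A 0))
    (hμ : ∀ k : ℕ, 1 ≤ k → μ k = μ (k - 1) * A (k - 1) / (lam + A k)) (k : ℕ) :
    0 < μ k := by
  have hden : ∀ k, 0 < lam + A k := fun k ↦ add_pos hlam (hApos k)
  induction k with
  | zero => rw [hμ0]; exact div_pos hlam (hden 0)
  | succ n ih =>
    rw [hμ (n + 1) n.succ_pos, Nat.add_sub_cancel]
    exact div_pos (mul_pos ih (hApos n)) (hden _)

end Positive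

theorem A_from_tail_ratio_general (lam : ℝ) (hlam : 0 < lam) (A : ℕ → ℝ)
    (hApos : ∀ k, 0 < A k)
    (μ : ℕ → ℝ) (hμ0 : μ 0 = lam / (lam + A 0))
    (hμ : ∀ k : ℕ, 1 ≤ k → μ k = μ (k - 1) * A (k - 1) / (lam + A k))
    (hsum : HasSum μ 1) :
    ∀ k : ℕ, A k = lam * (∑' j : ℕ, μ (k + 1 + j)) / μ k := by
  intro k
  have hden : ∀ k, lam + A k ≠ 0 := fun k ↦ (add_pos hlam (hApos k)).ne'
  have htelescope := lam_mul_sum_range_add_mul_eq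
    (by rw [hμ0, div_mul_cancel₀ _ (hden 0)]) (mul_add_eq_mul_of_eq_div hden hμ) k
  have htail : ∑' j, μ (k + 1 + j) = 1 - ∑ j ∈ range (k + 1), μ j := by
    simp_rw [add_comm (k + 1)]
    exact ((hasSum_nat_add_iff' (k + 1)).2 hsum).tsum_eq
  rw [eq_div_iff (pos_of_eq_div hlam hApos hμ0 hμ k).ne', htail]
  linear_combination htelescope

theorem A_from_tail_ratio (lam : ℝ) (hlam : 0 < lam) (A : ℕ → ℝ)
    (hApos : ∀ k, 0 < A k) (hAmono : Monotone A)
    (hAtop : Filter.Tendsto A Filter.atTop Filter.atTop)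
    (μ : ℕ → ℝ) (hμ0 : μ 0 = lam / (lam + A 0))
    (hμ : ∀ k : ℕ, 1 ≤ k → μ k = μ (k - 1) * A (k - 1) / (lam + A k))
    (hsum : HasSum μ 1) :
    ∀ k : ℕ, A k = lam * (∑' j : ℕ, μ (k + 1 + j)) / μ k :=
  A_from_tail_ratio_general lam hlam A hApos μ hμ0 hμ hsum
end
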